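/- The dimension of 𝔊_{r,s} over F satisfies, as an equality of real numbers, dim_F 𝔊_{r,s} = 2^{n−1} − 2^{(n−1)/2} · cos((n+1)π/4), where n = r + s and 2^{(n−1)/2} denotes the real power. -/

import Mathlib

/-
Setting (Eberlein, "Isometries of Clifford Algebras II"):
`F` a field with `char F ≠ 2`, `n = r + s > 0`, and `Cl(r,s)` the Clifford algebra of `F^n`
in which `eᵢ·eⱼ = -eⱼ·eᵢ` for `i ≠ j`, `eᵢ² = -1` for the first `r` indices and
`eᵢ² = +1` for the last `s` indices.
-/

open CliffordAlgebra

namespace CliffPaper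

/-- The quadratic form `q(x) = -x₁² - … - x_r² + x_{r+1}² + … + x_n²` on `F^(r+s)`. -/
noncomputable def Qf (F : Type*) [Field F] (r s : ℕ) : QuadraticForm F (Fin (r + s) → F) :=
  QuadraticMap.weightedSumSquares F (fun i : Fin (r + s) => if (i : ℕ) < r then (-1 : F) else 1)

/-- The Clifford algebra `Cl(r,s)`. -/
abbrev Cl (F : Type*) [Field F] (r s : ℕ) : Type _ := CliffordAlgebra (Qf F r s)

/-- The generator `e_i` of `Cl(r,s)` (`i` is a zero-based index, so `e_i² = -1` for `i < r`
and `e_i² = +1` for `r ≤ i`). -/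
noncomputable def gen (F : Type*) [Field F] (r s : ℕ) (i : Fin (r + s)) : Cl F r s :=
  ι (Qf F r s) (Pi.single i 1)

/-- For a multi-index `I = {i₁ < … < i_k}`, the product `e_I = e_{i₁} ⋯ e_{i_k}`. -/
noncomputable def eProd (F : Type*) [Field F] (r s : ℕ) (I : Finset (Fin (r + s))) : Cl F r s :=
  ((I.sort (· ≤ ·)).map (gen F r s)).prod

/-- Clifford conjugation: the unique anti-automorphism `c` of `Cl(r,s)` with `c ∘ c = id` and
`c(v) = -v` for all `v ∈ F^n`; concretely, reversal composed with the grade involution. -/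
noncomputable def conj (F : Type*) [Field F] (r s : ℕ) : Cl F r s →ₗ[F] Cl F r s :=
  (reverse (Q := Qf F r s)).comp (involute (Q := Qf F r s)).toLinearMap

theorem conj_mul (F : Type*) [Field F] (r s : ℕ) (a b : Cl F r s) :
    conj F r s (a * b) = conj F r s b * conj F r s a := by
  simp [conj, reverse.map_mul]

/-- `𝔊_{r,s} = {x ∈ Cl(r,s) : c(x) = -x}`, the `-1`-eigenspace of Clifford conjugation,
as an `F`-subspace of `Cl(r,s)`. -/
noncomputable def Gsub (F : Type*) [Field F] (r s : ℕ) : Submodule F (Cl F r s) :=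
  LinearMap.ker (conj F r s + LinearMap.id)

theorem mem_Gsub {F : Type*} [Field F] {r s : ℕ} (x : Cl F r s) :
    x ∈ Gsub F r s ↔ conj F r s x = -x := by
  simp [Gsub, LinearMap.mem_ker, add_eq_zero_iff_eq_neg]

attribute [local instance 100] LieRing.ofAssociativeRing

/-- `𝔊_{r,s}` as a Lie subalgebra of `Cl(r,s)` with the commutator bracket
`⁅x,y⁆ = x*y - y*x`. -/
noncomputable def GLie (F : Type*) [Field F] (r s : ℕ) : LieSubalgebra F (Cl F r s) where
  toSubmodule := Gsub F r s
  lie_mem' := by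
    intro x y hx hy
    have hx' : x ∈ Gsub F r s := hx
    have hy' : y ∈ Gsub F r s := hy
    show ⁅x, y⁆ ∈ Gsub F r s
    rw [mem_Gsub] at hx' hy' ⊢
    rw [Ring.lie_def, map_sub, conj_mul, conj_mul, hx', hy']
    noncomm_ring

/-- `𝔎_{r,s}`: the `+1`-eigenspace of `β` restricted to `𝔊_{r,s}`. -/
noncomputable def Ksub (F : Type*) [Field F] (r s : ℕ) (β : Cl F r s ≃ₐ[F] Cl F r s) :
    Submodule F (Cl F r s) :=
  LinearMap.ker (β.toLinearMap - LinearMap.id) ⊓ Gsub F r s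

/-- `𝔓_{r,s}`: the `-1`-eigenspace of `β` restricted to `𝔊_{r,s}`. -/
noncomputable def Psub (F : Type*) [Field F] (r s : ℕ) (β : Cl F r s ≃ₐ[F] Cl F r s) :
    Submodule F (Cl F r s) :=
  LinearMap.ker (β.toLinearMap + LinearMap.id) ⊓ Gsub F r s

/-- The center `𝔷(𝔎_{r,s}) = {x ∈ 𝔎_{r,s} : [x,y] = 0 for all y ∈ 𝔎_{r,s}}`. -/
noncomputable def ZKsub (F : Type*) [Field F] (r s : ℕ) (β : Cl F r s ≃ₐ[F] Cl F r s) :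
    Submodule F (Cl F r s) where
  carrier := {x | x ∈ Ksub F r s β ∧ ∀ y ∈ Ksub F r s β, x * y = y * x}
  zero_mem' := ⟨zero_mem _, fun y _ => by simp⟩
  add_mem' := fun {a b} ha hb => ⟨add_mem ha.1 hb.1, fun y hy => by
    rw [add_mul, mul_add, ha.2 y hy, hb.2 y hy]⟩
  smul_mem' := fun c a ha => ⟨Submodule.smul_mem _ c ha.1, fun y hy => by
    rw [smul_mul_assoc, mul_smul_comm, ha.2 y hy]⟩

/-- `𝔥_{r,s}`: the span of the `e_I` with `|I| ≡ 1, 2 (mod 4)` and `I ≠ {1,…,n}`. -/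
noncomputable def Hsub (F : Type*) [Field F] (r s : ℕ) : Submodule F (Cl F r s) :=
  Submodule.span F {x | ∃ I : Finset (Fin (r + s)), I.Nonempty ∧ I ≠ Finset.univ ∧
    (I.card % 4 = 1 ∨ I.card % 4 = 2) ∧ x = eProd F r s I}

/-- The volume element `ω = e₁e₂⋯e_n`. -/
noncomputable def omegaEl (F : Type*) [Field F] (r s : ℕ) : Cl F r s :=
  eProd F r s Finset.univ

end CliffPaper

/-!
The products `e_I` span `Cl(r,s)`: multiplying `e_I` on the left by a generator and re-sorting
only produces signs and squares `e_i² = ±1`. There are `2^n = dim Cl(r,s)` of them (the Clifford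
algebra is isomorphic to the exterior algebra as a vector space when `2` is invertible), so they
form a basis. Clifford conjugation acts on `e_I` by `(-1)^(k(k+1)/2)`, `k = |I|`, which is `-1`
exactly when `k ≡ 1, 2 (mod 4)`; hence `dim 𝔊_{r,s}` counts these subsets. The count is
`∑_I (1 - Re((1 + i) i^|I|)) / 2 = 2^(n-1) - Re (1 + i)^(n+1) / 2`, and `1 + i = √2 e^(iπ/4)`.
-/

open Module Finset

theorem Module.Basis.finrank_eigenspace_eq_card {K V ι : Type*} [Field K] [AddCommGroup V]
    [Module K V] [Fintype ι] [DecidableEq K] (b : Basis ι K V) {f : Module.End K V} {c : ι → K}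
    (hf : ∀ i, f (b i) = c i • b i) (μ : K) :
    finrank K (f.eigenspace μ) = #{i | c i = μ} := by
  have repr_apply : ∀ x i, b.repr (f x) i = c i * b.repr x i := fun x i => by
    have : (Finsupp.lapply i ∘ₗ b.repr.toLinearMap) ∘ₗ f
        = c i • (Finsupp.lapply i ∘ₗ b.repr.toLinearMap) := by
      refine b.ext fun j => ?_
      rcases eq_or_ne j i with rfl | hji
      · simp [hf]
      · simp [hf, hji]
    exact LinearMap.congr_fun this x
  have eigenspace_eq : f.eigenspace μ = Submodule.span K (b '' {i | c i = μ}) := by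
    ext x
    rw [Module.End.mem_eigenspace_iff, b.mem_span_image]
    constructor
    · intro hx i hi
      have := congr_arg (fun y => b.repr y i) hx
      simp only [repr_apply, map_smul, Finsupp.smul_apply, smul_eq_mul] at this
      exact mul_right_cancel₀ (Finsupp.mem_support_iff.mp hi) this
    · intro hx
      refine b.ext_elem fun i => ?_
      by_cases hi : b.repr x i = 0
      · simp [repr_apply, hi]
      · simp [repr_apply, show c i = μ from hx (Finsupp.mem_support_iff.mpr hi)]
  rw [eigenspace_eq, Set.image_eq_range]
  exact (finrank_span_eq_card (b.linearIndependent.comp _ Subtype.val_injective)).trans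
    (Fintype.card_subtype _)

theorem CliffordAlgebra.finrank_eq_two_pow {K M : Type*} [Field K] [AddCommGroup M] [Module K M]
    [FiniteDimensional K M] [Invertible (2 : K)] (Q : QuadraticForm K M) :
    finrank K (CliffordAlgebra Q) = 2 ^ finrank K M := by
  rw [(CliffordAlgebra.equivExterior Q).finrank_eq,
    finrank_eq_card_basis (Module.finBasis K M).ExteriorAlgebra, Fintype.card_finset,
    Fintype.card_fin]

theorem Complex.re_one_add_I_pow (m : ℕ) :
    ((1 + I) ^ m).re = √2 ^ m * Real.cos (m * Real.pi / 4) := by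
  have sqrt_two_mul_self : ((√2 : ℝ) : ℂ) * (√2 : ℝ) = 2 := by
    rw [← ofReal_mul, Real.mul_self_sqrt zero_le_two, ofReal_ofNat]
  have polar : 1 + I = √2 * (cos (Real.pi / 4 : ℝ) + sin (Real.pi / 4 : ℝ) * I) := by
    rw [← ofReal_cos, ← ofReal_sin, Real.cos_pi_div_four, Real.sin_pi_div_four]
    push_cast
    linear_combination (-(1 + I) / 2) * sqrt_two_mul_self
  have arg : (m : ℂ) * ((Real.pi / 4 : ℝ) : ℂ) = ((m * Real.pi / 4 : ℝ) : ℂ) := by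
    push_cast; ring
  rw [polar, mul_pow, cos_add_sin_mul_I_pow, arg, ← ofReal_pow, ← ofReal_cos, ← ofReal_sin,
    re_ofReal_mul]
  simp only [add_re, ofReal_re, re_ofReal_mul, I_re, mul_zero, add_zero]

theorem Finset.card_filter_card_mod_four_eq (α : Type*) [Fintype α] :
    (#{s : Finset α | #s % 4 = 1 ∨ #s % 4 = 2} : ℝ)
      = 2 ^ Fintype.card α / 2 - ((1 + Complex.I) ^ (Fintype.card α + 1)).re / 2 := by
  have indicator : ∀ k : ℕ, (if k % 4 = 1 ∨ k % 4 = 2 then (1 : ℝ) else 0)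
      = 1 / 2 - ((1 + Complex.I) * Complex.I ^ k).re / 2 := by
    intro k
    rw [← Nat.div_add_mod k 4, pow_add, pow_mul, Complex.I_pow_four, one_pow, one_mul]
    have := Nat.mod_lt k four_pos
    interval_cases k % 4 <;> norm_num [pow_succ]
  have binomial : ∑ s : Finset α, Complex.I ^ #s = (1 + Complex.I) ^ Fintype.card α := by
    simpa [add_comm] using Fintype.sum_pow_mul_eq_add_pow α Complex.I 1
  rw [natCast_card_filter, sum_congr rfl fun s _ => indicator #s, sum_sub_distrib,
    ← sum_div, ← sum_div, ← Complex.re_sum, ← mul_sum, binomial]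
  simp [pow_succ, mul_comm]

namespace CliffPaper

section algebra
variable {F : Type*} [Field F] {r s : ℕ}

theorem gen_mul_self (i : Fin (r + s)) :
    gen F r s i * gen F r s i = algebraMap F _ (if (i : ℕ) < r then -1 else 1) := by
  rw [gen, ι_sq_scalar]
  congr 1
  simp [Qf, QuadraticMap.weightedSumSquares_apply, Pi.single_apply]

theorem gen_mul_gen_of_ne {i j : Fin (r + s)} (h : i ≠ j) :
    gen F r s i * gen F r s j = -(gen F r s j * gen F r s i) := by
  have polar_eq : QuadraticMap.polar (Qf F r s) (Pi.single i 1) (Pi.single j 1) = 0 := by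
    simp only [QuadraticMap.polar, Qf, QuadraticMap.weightedSumSquares_apply, ← sum_sub_distrib]
    refine sum_eq_zero fun l _ => ?_
    by_cases hi : l = i <;> by_cases hj : l = j <;> simp_all
  rw [eq_neg_iff_add_eq_zero, gen, gen, ι_mul_ι_add_swap, polar_eq, map_zero]

theorem conj_gen (i : Fin (r + s)) : conj F r s (gen F r s i) = -gen F r s i := by
  simp [conj, gen]

theorem eProd_empty : eProd F r s ∅ = 1 := by
  simp [eProd]

theorem eProd_insert_of_lt {a : Fin (r + s)} {I : Finset (Fin (r + s))} (h : ∀ b ∈ I, a < b) :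
    eProd F r s (insert a I) = gen F r s a * eProd F r s I := by
  rw [eProd, sort_insert (· ≤ ·) (fun b hb => (h b hb).le) fun ha => lt_irrefl a (h a ha)]
  rfl

theorem eProd_mul_gen_of_notMem {a : Fin (r + s)} {I : Finset (Fin (r + s))} (ha : a ∉ I) :
    eProd F r s I * gen F r s a = (-1 : F) ^ #I • (gen F r s a * eProd F r s I) := by
  induction I using Finset.induction_on_min with
  | empty => simp [eProd_empty]
  | insert b J hb ih =>
    have hab : a ≠ b := fun h => ha (h ▸ mem_insert_self a J)
    have haJ : a ∉ J := fun h => ha (mem_insert_of_mem h)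
    have hbJ : b ∉ J := fun h => lt_irrefl b (hb b h)
    rw [eProd_insert_of_lt hb, mul_assoc, ih haJ, mul_smul_comm, ← mul_assoc,
      gen_mul_gen_of_ne hab.symm, card_insert_of_notMem hbJ, pow_succ, mul_neg_one, neg_smul,
      ← smul_neg, neg_mul, mul_assoc]

variable (F) in
/-- `(-1)^(k(k+1)/2)`: the grade involution contributes `(-1)^k` and reversal `(-1)^(k(k-1)/2)`
to the action of Clifford conjugation on a product of `k` distinct generators. -/
def conjSign (k : ℕ) : F := if k % 4 = 1 ∨ k % 4 = 2 then -1 else 1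

theorem conjSign_succ (k : ℕ) : conjSign F (k + 1) = -((-1) ^ k * conjSign F k) := by
  rcases Nat.even_or_odd k with hk | hk
  · have := Nat.even_iff.mp hk
    rcases (by omega : k % 4 = 0 ∨ k % 4 = 2) with h | h <;>
      simp [conjSign, hk.neg_one_pow, h, Nat.add_mod]
  · have := Nat.odd_iff.mp hk
    rcases (by omega : k % 4 = 1 ∨ k % 4 = 3) with h | h <;>
      simp [conjSign, hk.neg_one_pow, h, Nat.add_mod]

theorem conjSign_eq_neg_one_iff (hF : ringChar F ≠ 2) {k : ℕ} :
    conjSign F k = -1 ↔ k % 4 = 1 ∨ k % 4 = 2 := by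
  unfold conjSign
  split_ifs with h <;> simp [h, (Ring.neg_one_ne_one_of_char_ne_two hF).symm]

theorem conj_eProd (I : Finset (Fin (r + s))) :
    conj F r s (eProd F r s I) = conjSign F #I • eProd F r s I := by
  induction I using Finset.induction_on_min with
  | empty => simp [eProd_empty, conjSign, conj]
  | insert a J ha ih =>
    have haJ : a ∉ J := fun h => lt_irrefl a (ha a h)
    rw [eProd_insert_of_lt ha, conj_mul, ih, conj_gen, mul_neg, smul_mul_assoc,
      eProd_mul_gen_of_notMem haJ, smul_smul, card_insert_of_notMem haJ, conjSign_succ,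
      neg_smul, mul_comm]

theorem gen_mul_eProd_mem_span (j : Fin (r + s)) (I : Finset (Fin (r + s))) :
    gen F r s j * eProd F r s I ∈ Submodule.span F (eProd F r s '' {K | K ⊆ insert j I}) := by
  induction I using Finset.induction_on_min with
  | empty =>
    rw [← eProd_insert_of_lt (by simp)]
    exact Submodule.subset_span ⟨_, Subset.refl _, rfl⟩
  | insert a J ha ih =>
    rcases lt_trichotomy j a with hja | rfl | haj
    · rw [← eProd_insert_of_lt fun b hb => ?_]
      · exact Submodule.subset_span ⟨_, Subset.refl _, rfl⟩
      · rcases mem_insert.mp hb with rfl | hb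
        exacts [hja, hja.trans (ha b hb)]
    · rw [eProd_insert_of_lt ha, ← mul_assoc, gen_mul_self, ← Algebra.smul_def]
      exact Submodule.smul_mem _ _
        (Submodule.subset_span ⟨J, (subset_insert _ _).trans (subset_insert _ _), rfl⟩)
    · rw [eProd_insert_of_lt ha, ← mul_assoc, gen_mul_gen_of_ne haj.ne', neg_mul, mul_assoc]
      refine neg_mem (Submodule.span_mono ?_
        (Submodule.apply_mem_span_image_of_mem_span (LinearMap.mulLeft F (gen F r s a)) ih))
      rintro _ ⟨_, ⟨K, hK, rfl⟩, rfl⟩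
      have hKa : ∀ b ∈ K, a < b := fun b hb => by
        rcases mem_insert.mp (hK hb) with rfl | hb
        exacts [haj, ha b hb]
      refine ⟨insert a K, insert_subset_iff.mpr ⟨?_, hK.trans ?_⟩,
        eProd_insert_of_lt hKa⟩
      · simp
      · exact insert_subset_insert _ (subset_insert _ _)

theorem ι_mem_span_range_gen (v : Fin (r + s) → F) :
    ι (Qf F r s) v ∈ Submodule.span F (Set.range (gen F r s)) := by
  have := Submodule.apply_mem_span_image_of_mem_span (ι (Qf F r s))
    ((Pi.basisFun F (Fin (r + s))).mem_span v)
  rwa [← Set.range_comp, show ι (Qf F r s) ∘ Pi.basisFun F _ = gen F r s from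
    funext fun i => by simp [gen]] at this

theorem span_range_eProd_eq_top : Submodule.span F (Set.range (eProd F r s)) = ⊤ := by
  set S := Submodule.span F (Set.range (eProd F r s))
  have span_gen_mul_le : Submodule.span F (Set.range (gen F r s)) * S ≤ S := by
    rw [Submodule.span_mul_span, Submodule.span_le]
    rintro _ ⟨_, ⟨i, rfl⟩, _, ⟨I, rfl⟩, rfl⟩
    exact Submodule.span_mono (Set.image_subset_range _ _) (gen_mul_eProd_mem_span i I)
  have mul_mem : ∀ x : Cl F r s, ∀ z ∈ S, x * z ∈ S := by
    intro x
    induction x using CliffordAlgebra.induction with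
    | algebraMap c => exact fun z hz => by rw [← Algebra.smul_def]; exact S.smul_mem c hz
    | ι v => exact fun z hz => span_gen_mul_le (Submodule.mul_mem_mul (ι_mem_span_range_gen v) hz)
    | mul x y hx hy => exact fun z hz => by rw [mul_assoc]; exact hx _ (hy z hz)
    | add x y hx hy => exact fun z hz => by rw [add_mul]; exact S.add_mem (hx z hz) (hy z hz)
  refine eq_top_iff.mpr fun x _ => ?_
  simpa using mul_mem x 1 (Submodule.subset_span ⟨∅, eProd_empty⟩)

variable (F r s) in
noncomputable def eBasis [Invertible (2 : F)] : Basis (Finset (Fin (r + s))) F (Cl F r s) :=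
  basisOfTopLeSpanOfCardEqFinrank (eProd F r s) span_range_eProd_eq_top.ge <| by
    rw [CliffordAlgebra.finrank_eq_two_pow, Fintype.card_finset, Module.finrank_fin_fun,
      Fintype.card_fin]

@[simp]
theorem coe_eBasis [Invertible (2 : F)] : ⇑(eBasis F r s) = eProd F r s :=
  coe_basisOfTopLeSpanOfCardEqFinrank _ _ _

theorem Gsub_eq_eigenspace : Gsub F r s = Module.End.eigenspace (conj F r s) (-1) := by
  ext x
  rw [mem_Gsub, Module.End.mem_eigenspace_iff, neg_one_smul]

theorem finrank_Gsub (hF : ringChar F ≠ 2) :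
    finrank F (Gsub F r s) = #{I : Finset (Fin (r + s)) | #I % 4 = 1 ∨ #I % 4 = 2} := by
  classical
  let := invertibleOfNonzero (Ring.two_ne_zero hF)
  rw [Gsub_eq_eigenspace, (eBasis F r s).finrank_eigenspace_eq_card (c := fun I => conjSign F #I)
    fun I => by rw [coe_eBasis, conj_eProd]]
  exact congrArg card (filter_congr fun I _ => conjSign_eq_neg_one_iff hF)

end algebra

/-- dim_F 𝔊_{r,s} = 2^(n-1) - 2^((n-1)/2) cos((n+1)π/4), n = r+s. -/
theorem statement4 (F : Type*) [Field F] (hF : ringChar F ≠ 2) (r s : ℕ) (hn : 0 < r + s) :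
    (Module.finrank F ↥(Gsub F r s) : ℝ)
      = 2 ^ (r + s - 1) -
        (2 : ℝ) ^ (((r + s : ℝ) - 1) / 2) * Real.cos (((r + s : ℝ) + 1) * Real.pi / 4) := by
  have two_pow_pred : (2 : ℝ) ^ (r + s - 1) = 2 ^ (r + s) / 2 := by
    rw [eq_div_iff two_ne_zero, ← pow_succ, Nat.sub_add_cancel hn]
  have sqrt_two_pow : √2 ^ (r + s + 1) / 2 = (2 : ℝ) ^ (((r + s : ℝ) - 1) / 2) := by
    rw [Real.sqrt_eq_rpow, ← Real.rpow_natCast, ← Real.rpow_mul zero_le_two,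
      ← Real.rpow_sub_one two_ne_zero]
    congr 1
    push_cast
    ring
  rw [finrank_Gsub hF, card_filter_card_mod_four_eq, Fintype.card_fin, Complex.re_one_add_I_pow,
    two_pow_pred, ← sqrt_two_pow]
  push_cast
  ring

end CliffPaper
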